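/- For integers n ≥ 0 and k, define G_{n,k}(z) = q^{n²k} z^{nk} / [ (q)_n (q^{−2n+1} z⁻¹)_n ] ∈ ℚ(q,z). Then for all integers n ≥ 0 and all integers k the recursion G_{n,k}(z) = Σ_{i=0}^{n} [ q^{i²k} z^{ik} / (q)_i ] · G_{n−i,k−1}(q^{2i} z) holds in ℚ(q,z), where G_{m,k'}(q^{2i}z) denotes the substitution z ↦ q^{2i}z. -/
import Mathlib


/-!
STATEMENT 5: for `G_{n,k}(z) = q^{n²k} z^{nk} / ((q)_n (q^{-2n+1} z⁻¹)_n)` in `ℚ(q,z)`,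
the recursion `G_{n,k}(z) = Σ_{i=0}^{n} (q^{i²k} z^{ik}/(q)_i) G_{n-i,k-1}(q^{2i} z)` holds
for all integers `n ≥ 0` and all integers `k`.
-/

noncomputable section

open scoped BigOperators

/-- The rational function field `ℚ(q,z)`. -/
abbrev K : Type := FractionRing (MvPolynomial (Fin 2) ℚ)

def q : K := algebraMap (MvPolynomial (Fin 2) ℚ) K (MvPolynomial.X 0)
def z : K := algebraMap (MvPolynomial (Fin 2) ℚ) K (MvPolynomial.X 1)

/-- `(a)_n = ∏_{j=0}^{n-1} (1 - a q^j)`. -/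
def poch (a : K) (n : ℕ) : K := ∏ j ∈ Finset.range n, (1 - a * q ^ j)

/-- `G_{n,k}(w) = q^{n²k} w^{nk} / ((q)_n (q^{-2n+1} w⁻¹)_n)`, where `w` is the argument
substituted for `z`. -/
def G (n : ℕ) (k : ℤ) (w : K) : K :=
  q ^ ((n : ℤ) ^ 2 * k) * w ^ ((n : ℤ) * k) /
    (poch q n * poch (q ^ (-2 * (n : ℤ) + 1) * w⁻¹) n)


lemma alg_inj : Function.Injective (algebraMap (MvPolynomial (Fin 2) ℚ) K) :=
  IsFractionRing.injective _ _

lemma hq0 : q ≠ 0 := by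
  rw [q, map_ne_zero_iff _ alg_inj]
  exact MvPolynomial.X_ne_zero 0

lemma hz0 : z ≠ 0 := by
  rw [z, map_ne_zero_iff _ alg_inj]
  exact MvPolynomial.X_ne_zero 1

lemma q_pow_ne_one (m : ℕ) : q ^ (m + 1) ≠ 1 := by
  rw [q, ← map_pow, ← map_one (algebraMap (MvPolynomial (Fin 2) ℚ) K)]
  intro h
  have := alg_inj h
  have := congrArg MvPolynomial.constantCoeff this
  simp at this

lemma q_pow_mul_z_ne_one (a : ℕ) : q ^ a * z ≠ 1 := by
  rw [q, z, ← map_pow, ← map_mul, ← map_one (algebraMap (MvPolynomial (Fin 2) ℚ) K)]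
  intro h
  have := congrArg MvPolynomial.constantCoeff (alg_inj h)
  simp at this

lemma q_pow_ne_z (a : ℕ) : q ^ a ≠ z := by
  rw [q, z, ← map_pow]
  intro h
  have := congrArg (MvPolynomial.eval (fun i : Fin 2 => if i = 0 then (1:ℚ) else 0)) (alg_inj h)
  simp at this

lemma q_zpow_ne_z (c : ℤ) : q ^ c ≠ z := by
  cases c with
  | ofNat a => simpa using q_pow_ne_z a
  | negSucc a =>
    rw [zpow_negSucc]
    intro h
    apply q_pow_mul_z_ne_one (a + 1)
    rw [← h, mul_inv_cancel₀ (pow_ne_zero _ hq0)]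

lemma q_zpow_mul_z_ne_one (c : ℤ) : q ^ c * z ≠ 1 := by
  cases c with
  | ofNat a => simpa using q_pow_mul_z_ne_one a
  | negSucc a =>
    rw [zpow_negSucc]
    intro h
    apply q_pow_ne_z (a + 1)
    have := congrArg (fun t : K => q ^ (a + 1) * t) h
    simp only [← mul_assoc, mul_inv_cancel₀ (pow_ne_zero _ hq0), one_mul, mul_one] at this
    exact this.symm

lemma factor_qz_ne (c : ℤ) : (1 : K) - q ^ c * z⁻¹ ≠ 0 := by
  rw [sub_ne_zero]
  intro h
  apply q_zpow_ne_z c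
  have := congrArg (fun t : K => t * z) h.symm
  simpa [mul_assoc, inv_mul_cancel₀ hz0] using this

lemma factor_q_ne (j : ℕ) : (1 : K) - q * q ^ j ≠ 0 := by
  rw [sub_ne_zero, ← pow_succ']
  exact fun h => q_pow_ne_one j h.symm

lemma poch_q_ne (n : ℕ) : poch q n ≠ 0 :=
  Finset.prod_ne_zero_iff.mpr fun j _ => factor_q_ne j

lemma poch_qz_ne (c : ℤ) (n : ℕ) : poch (q ^ c * z⁻¹) n ≠ 0 := by
  apply Finset.prod_ne_zero_iff.mpr
  intro j _
  have : q ^ c * z⁻¹ * q ^ j = q ^ (c + j) * z⁻¹ := by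
    rw [zpow_add₀ hq0, zpow_natCast]; ring
  rw [this]
  exact factor_qz_ne _

lemma factor_P_ne (n l : ℕ) : q ^ (n : ℤ) * z - (q⁻¹) ^ l ≠ 0 := by
  rw [sub_ne_zero]
  intro h
  apply q_pow_mul_z_ne_one (n + l)
  calc q ^ (n + l) * z = q ^ l * (q ^ (n : ℤ) * z) := by rw [zpow_natCast]; ring
    _ = q ^ l * q⁻¹ ^ l := by rw [h]
    _ = 1 := by rw [← mul_pow, mul_inv_cancel₀ hq0, one_pow]

def P (y : K) (i : ℕ) : K := ∏ l ∈ Finset.range i, (y - q⁻¹ ^ l)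

def c (n i : ℕ) : K := poch q n / (poch q i * poch q (n - i) * q ^ (i * (n - i)))

lemma poch_succ (a : K) (n : ℕ) : poch a (n + 1) = poch a n * (1 - a * q ^ n) :=
  Finset.prod_range_succ _ n

lemma poch_zero (a : K) : poch a 0 = 1 := by simp [poch]

lemma P_succ (y : K) (i : ℕ) : P y (i + 1) = P y i * (y - q⁻¹ ^ i) :=
  Finset.prod_range_succ _ i

lemma P_zero (y : K) : P y 0 = 1 := by simp [P]

lemma c_zero (n : ℕ) : c n 0 = 1 := by
  simp [c, poch_zero, div_self (poch_q_ne n)]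

lemma c_self (n : ℕ) : c n n = 1 := by
  simp [c, Nat.sub_self, poch_zero, div_self (poch_q_ne n)]

lemma pascal (i m : ℕ) :
    c (i + m + 2) (i + 1) = c (i + m + 1) i + q⁻¹ ^ (i + 1) * c (i + m + 1) (i + 1) := by
  have e1 : i + m + 2 - (i + 1) = m + 1 := by omega
  have e2 : i + m + 1 - i = m + 1 := by omega
  have e3 : i + m + 1 - (i + 1) = m := by omega
  rw [c, c, c, e1, e2, e3, inv_pow]
  rw [poch_succ q (i + m + 1), poch_succ q i, poch_succ q m]
  have hkey : (1 : K) - q * q ^ (i + m + 1) =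
      ((1 : K) - q * q ^ i) * (q * q ^ m) + (1 - q * q ^ m) := by
    rw [pow_add, pow_add, pow_one]; ring
  rw [hkey]
  set u := (1 : K) - q * q ^ i with hu_def
  set v := (1 : K) - q * q ^ m with hv_def
  have hu : u ≠ 0 := factor_q_ne i
  have hv : v ≠ 0 := factor_q_ne m
  have hpi := poch_q_ne i
  have hpm := poch_q_ne m
  have hqp : ∀ t : ℕ, q ^ t ≠ 0 := fun t => pow_ne_zero t hq0
  have hD2 : poch q i * (poch q m * v) * q ^ (i * (m + 1)) ≠ 0 := by
    exact mul_ne_zero (mul_ne_zero hpi (mul_ne_zero hpm hv)) (hqp _)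
  have hD3 : poch q i * u * poch q m * q ^ ((i + 1) * m) * q ^ (i + 1) ≠ 0 := by
    exact mul_ne_zero (mul_ne_zero (mul_ne_zero (mul_ne_zero hpi hu) hpm) (hqp _)) (hqp _)
  have hD1 : poch q i * u * (poch q m * v) * q ^ ((i + 1) * (m + 1)) ≠ 0 := by
    exact mul_ne_zero (mul_ne_zero (mul_ne_zero hpi hu) (mul_ne_zero hpm hv)) (hqp _)
  rw [inv_mul_eq_div, div_div, div_add_div _ _ hD2 hD3, div_eq_div_iff hD1 (mul_ne_zero hD2 hD3)]
  have ee1 : (i + 1) * (m + 1) = i * m + i + m + 1 := by ring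
  have ee2 : (i + 1) * m = i * m + m := by ring
  have ee3 : i * (m + 1) = i * m + i := by ring
  rw [ee1, ee2, ee3, pow_add, pow_add, pow_add, pow_add, pow_add, pow_add, pow_one]
  ring

lemma core (y : K) : ∀ n : ℕ, y ^ n = ∑ i ∈ Finset.range (n + 1), c n i * P y i := by
  intro n
  induction n with
  | zero => simp [c_zero, P_zero]
  | succ n ih =>
    have step : y ^ (n + 1) = ∑ i ∈ Finset.range (n + 1), y * (c n i * P y i) := by
      rw [pow_succ, ih, Finset.sum_mul]
      exact Finset.sum_congr rfl fun i _ => by ring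
    rw [step]
    have expand : ∀ i, y * (c n i * P y i) = c n i * P y (i + 1) + (q⁻¹ ^ i * c n i) * P y i := by
      intro i
      rw [P_succ]
      ring
    rw [Finset.sum_congr rfl fun i _ => expand i, Finset.sum_add_distrib]
    -- A + B where A = Σ_{i<n+1} c n i * P y (i+1), B = Σ_{i<n+1} (q⁻¹^i c n i) P y i
    rw [Finset.sum_range_succ (fun i => c n i * P y (i + 1)) n]      -- A = Σ_{i<n} + c n n * P y (n+1)
    rw [Finset.sum_range_succ' (fun i => (q⁻¹ ^ i * c n i) * P y i) n] -- B = Σ_{i<n} f(i+1) + f 0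
    rw [Finset.sum_range_succ' (fun i => c (n + 1) i * P y i) (n + 1)] -- goal RHS = Σ_{i<n+1} g(i+1) + g 0
    rw [Finset.sum_range_succ (fun i => c (n + 1) (i + 1) * P y (i + 1)) n]
    rw [c_self, c_self, c_zero, c_zero, P_zero]
    have hterm : ∀ i ∈ Finset.range n,
        c (n + 1) (i + 1) * P y (i + 1)
          = c n i * P y (i + 1) + (q⁻¹ ^ (i + 1) * c n (i + 1)) * P y (i + 1) := by
      intro i hi
      have hlt : i < n := Finset.mem_range.mp hi
      obtain ⟨m, hm⟩ : ∃ m, n = i + m + 1 := ⟨n - i - 1, by omega⟩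
      subst hm
      rw [show i + m + 1 + 1 = i + m + 2 from rfl, pascal]
      ring
    rw [Finset.sum_congr rfl hterm, Finset.sum_add_distrib]
    ring

lemma poch_split (n i j : ℕ) (hn : n = j + i) :
    poch (q ^ (-2 * (n : ℤ) + 1) * z⁻¹) n
      = poch (q ^ (-2 * (n : ℤ) + 1) * z⁻¹) j
        * (((q ^ (n : ℤ) * z)⁻¹) ^ i * P (q ^ (n : ℤ) * z) i) := by
  set A := q ^ (-2 * (n : ℤ) + 1) * z⁻¹ with hA
  set y := q ^ (n : ℤ) * z with hy
  have hy0 : y ≠ 0 := mul_ne_zero (zpow_ne_zero _ hq0) hz0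
  have hfac : ∀ m ∈ Finset.range i,
      (1 : K) - A * q ^ (j + m) = y⁻¹ * (y - q⁻¹ ^ (i - 1 - m)) := by
    intro m hm
    have hmi : m < i := Finset.mem_range.mp hm
    have h1 : y⁻¹ * (y - q⁻¹ ^ (i - 1 - m)) = 1 - y⁻¹ * q⁻¹ ^ (i - 1 - m) := by
      rw [mul_sub, inv_mul_cancel₀ hy0]
    rw [h1]
    have lhs_eq : A * q ^ (j + m) = q ^ (-2 * (n : ℤ) + 1 + ((j + m : ℕ) : ℤ)) * z⁻¹ := by
      rw [zpow_add₀ hq0, zpow_natCast, hA]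
      ring
    have rhs_eq : y⁻¹ * q⁻¹ ^ (i - 1 - m) = q ^ (-(n : ℤ) + -((i - 1 - m : ℕ) : ℤ)) * z⁻¹ := by
      rw [zpow_add₀ hq0, zpow_neg, zpow_neg, hy, mul_inv]
      simp only [zpow_natCast, ← inv_pow]
      ring
    rw [lhs_eq, rhs_eq]
    have : (-2 * (n : ℤ) + 1 + ((j + m : ℕ) : ℤ)) = (-(n : ℤ) + -((i - 1 - m : ℕ) : ℤ)) := by
      omega
    rw [this]
  calc poch A n = poch A (j + i) := by rw [← hn]
    _ = poch A j * ∏ m ∈ Finset.range i, (1 - A * q ^ (j + m)) := by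
        rw [poch, poch, Finset.prod_range_add]
    _ = poch A j * ∏ m ∈ Finset.range i, (y⁻¹ * (y - q⁻¹ ^ (i - 1 - m))) := by
        rw [Finset.prod_congr rfl hfac]
    _ = poch A j * ∏ m ∈ Finset.range i, (y⁻¹ * (y - q⁻¹ ^ m)) := by
        rw [← Finset.prod_range_reflect (fun t => y⁻¹ * (y - q⁻¹ ^ t)) i]
    _ = poch A j * ((y⁻¹) ^ i * P y i) := by
        rw [Finset.prod_mul_distrib, Finset.prod_const, Finset.card_range, P]

lemma mono_pow (cq : ℤ) (m : ℕ) : (q ^ cq * z) ^ m = q ^ (cq * (m : ℤ)) * z ^ ((m : ℕ) : ℤ) := by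
  rw [mul_pow, ← zpow_natCast (q ^ cq) m, ← zpow_mul, ← zpow_natCast z m]

lemma mono_inv_pow (cq : ℤ) (m : ℕ) :
    ((q ^ cq * z)⁻¹) ^ m = q ^ (-(cq * (m : ℤ))) * z ^ (-((m : ℕ) : ℤ)) := by
  rw [inv_pow, mono_pow, mul_inv, ← zpow_neg, ← zpow_neg]

lemma P_ne (n : ℕ) (i : ℕ) : P (q ^ ((n : ℕ) : ℤ) * z) i ≠ 0 := by
  apply Finset.prod_ne_zero_iff.mpr
  intro l _
  exact factor_P_ne n l


lemma term_eq (n : ℕ) (k : ℤ) (i j : ℕ) (hn : n = j + i) :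
    q ^ ((i : ℤ) ^ 2 * k) * z ^ ((i : ℤ) * k) / poch q i * G j (k - 1) (q ^ (2 * (i : ℤ)) * z)
      = G n k z * ((q ^ ((n : ℕ) : ℤ) * z) ^ n)⁻¹ * (c n i * P (q ^ ((n : ℕ) : ℤ) * z) i) := by
  subst hn
  have hbase : q ^ (-2 * (j : ℤ) + 1) * (q ^ (2 * (i : ℤ)) * z)⁻¹
      = q ^ (-2 * ((j + i : ℕ) : ℤ) + 1) * z⁻¹ := by
    rw [mul_inv, ← zpow_neg, ← mul_assoc, ← zpow_add₀ hq0]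
    have h2 : (-2 * (j : ℤ) + 1) + -(2 * (i : ℤ)) = -2 * ((j + i : ℕ) : ℤ) + 1 := by
      push_cast; ring
    rw [h2]
  rw [G, G, hbase, poch_split (j + i) i j rfl, c, show j + i - i = j from by omega]
  rw [mul_zpow (q ^ (2 * (i : ℤ))) z ((j : ℤ) * (k - 1)), ← zpow_mul]
  rw [mono_inv_pow, mono_pow]
  rw [← zpow_natCast q (i * j)]
  have hpi := poch_q_ne i
  have hpj := poch_q_ne j
  have hpn := poch_q_ne (j + i)
  have hP := P_ne (j + i) i
  trans (q ^ ((i : ℤ) ^ 2 * k + ((j : ℤ) ^ 2 * (k - 1) + 2 * (i : ℤ) * ((j : ℤ) * (k - 1))))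
      * z ^ ((i : ℤ) * k + (j : ℤ) * (k - 1))
      * ((poch q i)⁻¹ * ((poch q j)⁻¹
          * (poch (q ^ (-2 * ((j + i : ℕ) : ℤ) + 1) * z⁻¹) j)⁻¹)))
  · simp only [div_eq_mul_inv, mul_inv, inv_inv, zpow_neg, zpow_add₀ hq0, zpow_add₀ hz0]
    ring
  symm
  trans (q ^ (((j + i : ℕ) : ℤ) ^ 2 * k + (((j + i : ℕ) : ℤ) * (i : ℤ)
          + (-(((j + i : ℕ) : ℤ) * ((j + i : ℕ) : ℤ)) + -((i * j : ℕ) : ℤ))))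
      * z ^ (((j + i : ℕ) : ℤ) * k + ((i : ℤ) + -((j + i : ℕ) : ℤ)))
      * ((poch q i)⁻¹ * ((poch q j)⁻¹
          * (poch (q ^ (-2 * ((j + i : ℕ) : ℤ) + 1) * z⁻¹) j)⁻¹))
      * (((poch q (j + i))⁻¹ * poch q (j + i))
          * ((P (q ^ ((j + i : ℕ) : ℤ) * z) i)⁻¹ * P (q ^ ((j + i : ℕ) : ℤ) * z) i)))
  · simp only [div_eq_mul_inv, mul_inv, inv_inv, zpow_neg, zpow_add₀ hq0, zpow_add₀ hz0]
    ring
  rw [inv_mul_cancel₀ hpn, inv_mul_cancel₀ hP, one_mul, mul_one]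
  have hE : (((j + i : ℕ) : ℤ) ^ 2 * k + (((j + i : ℕ) : ℤ) * (i : ℤ)
          + (-(((j + i : ℕ) : ℤ) * ((j + i : ℕ) : ℤ)) + -((i * j : ℕ) : ℤ))))
      = ((i : ℤ) ^ 2 * k + ((j : ℤ) ^ 2 * (k - 1) + 2 * (i : ℤ) * ((j : ℤ) * (k - 1)))) := by
    push_cast; ring
  have hF : (((j + i : ℕ) : ℤ) * k + ((i : ℤ) + -((j + i : ℕ) : ℤ)))
      = ((i : ℤ) * k + (j : ℤ) * (k - 1)) := by
    push_cast; ring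
  rw [hE, hF]

theorem G_recursion (n : ℕ) (k : ℤ) :
    G n k z =
      ∑ i ∈ Finset.range (n + 1),
        q ^ ((i : ℤ) ^ 2 * k) * z ^ ((i : ℤ) * k) / poch q i *
          G (n - i) (k - 1) (q ^ (2 * (i : ℤ)) * z) := by
  have hy0 : q ^ ((n : ℕ) : ℤ) * z ≠ 0 := mul_ne_zero (zpow_ne_zero _ hq0) hz0
  have hyn : (q ^ ((n : ℕ) : ℤ) * z) ^ n ≠ 0 := pow_ne_zero _ hy0
  have hterm : ∀ i ∈ Finset.range (n + 1),
      q ^ ((i : ℤ) ^ 2 * k) * z ^ ((i : ℤ) * k) / poch q i *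
          G (n - i) (k - 1) (q ^ (2 * (i : ℤ)) * z)
        = G n k z * ((q ^ ((n : ℕ) : ℤ) * z) ^ n)⁻¹
            * (c n i * P (q ^ ((n : ℕ) : ℤ) * z) i) := by
    intro i hi
    have hin : i ≤ n := by
      have := Finset.mem_range.mp hi; omega
    exact term_eq n k i (n - i) (by omega)
  rw [Finset.sum_congr rfl hterm, ← Finset.mul_sum, ← core (q ^ ((n : ℕ) : ℤ) * z) n,
    mul_assoc, inv_mul_cancel₀ hyn, mul_one]

end
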